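/- Under assumptions (C1)-(C3), if u_ε → u_0 strongly in L^∞((0,∞);U), then the controlled states w_ε(t) = ∫_0^t T^ε_{t-σ} B u_ε(σ) dσ converge to w_0 in C([0,τ];X) for every τ > 0. -/

import Mathlib

/-!
The resolvents `R_ε = A_ε⁻¹ = ι ∘ Ainv ε` are positive operators on `X`, and (C2) bounds
`⟪R_ε x, x⟫` by a fixed multiple of `‖x‖²`, which for positive operators bounds `‖R_ε‖`
uniformly. With this bound the strong convergence `R_ε → R₀` of (C3) is uniform on compact sets,
and the identity
`R_ε T⁰_s R₀ y - T^ε_s R_ε R₀ y = ∫_0^s T^ε_{s-σ} (R₀ - R_ε) T⁰_σ y dσ`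
gives `T^ε_s x → T⁰_s x` uniformly for `s ∈ [0, τ]` when `x = R₀ R₀ y`. Such `x` are dense since
`R₀` is strictly positive, and all `T^ε_s` are contractions, so this holds for every `x`
(Trotter–Kato). Finally, approximate `B u₀` in `L¹(0, τ)` by a simple function: on its finitely
many values the semigroups converge uniformly, and the remaining errors are bounded by
`L¹(0, τ)`-norms, the one of `B (u_ε - u₀)` being at most `τ ‖B‖ ‖u_ε - u₀‖_∞`.
-/

open MeasureTheory Filter Topology Set
open scoped RealInnerProductSpace ENNReal

namespace ContinuousLinearMap

variable {E : Type*} [NormedAddCommGroup E] [InnerProductSpace ℝ E] {T : E →L[ℝ] E}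

theorem IsPositive.inner_sq_le (hT : T.IsPositive) (x y : E) :
    ⟪T x, y⟫ ^ 2 ≤ ⟪T x, x⟫ * ⟪T y, y⟫ := by
  have hsymm : ⟪T y, x⟫ = ⟪T x, y⟫ := by
    rw [hT.inner_left_eq_inner_right, real_inner_comm]
  have hquad : ∀ t : ℝ, 0 ≤ ⟪T y, y⟫ * (t * t) + 2 * ⟪T x, y⟫ * t + ⟪T x, x⟫ := fun t => by
    have h := hT.inner_nonneg_left (x + t • y)
    simp only [map_add, map_smul, inner_add_left, inner_add_right, real_inner_smul_left,
      real_inner_smul_right, hsymm] at h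
    linarith
  have hdisc := discrim_le_zero hquad
  rw [discrim] at hdisc
  nlinarith

theorem IsPositive.norm_apply_sq_le (hT : T.IsPositive) (x : E) :
    ‖T x‖ ^ 2 ≤ ‖T‖ * ⟪T x, x⟫ := by
  have hcs := hT.inner_sq_le x (T x)
  have hTTx : ⟪T (T x), T x⟫ ≤ ‖T‖ * ‖T x‖ ^ 2 := by
    calc ⟪T (T x), T x⟫ ≤ ‖T (T x)‖ * ‖T x‖ := real_inner_le_norm _ _
      _ ≤ ‖T‖ * ‖T x‖ * ‖T x‖ := by gcongr; exact T.le_opNorm _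
      _ = ‖T‖ * ‖T x‖ ^ 2 := by ring
  rw [real_inner_self_eq_norm_sq] at hcs
  have hx := hT.inner_nonneg_left x
  rcases (norm_nonneg (T x)).eq_or_lt with h0 | hpos
  · rw [← h0]; nlinarith [norm_nonneg T]
  · nlinarith [mul_le_mul_of_nonneg_left hTTx hx, pow_pos hpos 2]

theorem IsPositive.norm_apply_le_of_inner_le (hT : T.IsPositive) {M : ℝ}
    (hM : ∀ x, ⟪T x, x⟫ ≤ M * ‖x‖ ^ 2) (x : E) : ‖T x‖ ≤ M * ‖x‖ := by
  have hcs := hT.inner_sq_le x (T x)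
  rw [real_inner_self_eq_norm_sq] at hcs
  have hx := hT.inner_nonneg_left x
  have hTx := hT.inner_nonneg_left (T x)
  have hMx : 0 ≤ M * ‖x‖ := by
    rcases (norm_nonneg x).eq_or_lt with h0 | hpos
    · simp [← h0]
    · exact le_of_mul_le_mul_right (by nlinarith [hM x]) hpos
  have hsq : ‖T x‖ ^ 2 * ‖T x‖ ^ 2 ≤ (M * ‖x‖) ^ 2 * ‖T x‖ ^ 2 := by
    nlinarith [mul_le_mul (hM x) (hM (T x)) hTx (by nlinarith [mul_nonneg hMx (norm_nonneg x)])]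
  rcases (norm_nonneg (T x)).eq_or_lt with h0 | hpos
  · rw [← h0]; exact hMx
  · refine (pow_le_pow_iff_left₀ (norm_nonneg _) hMx two_ne_zero).1 ?_
    exact le_of_mul_le_mul_right hsq (pow_pos hpos 2)

theorem denseRange_of_inner_apply_self_pos [CompleteSpace E] (hT : ∀ x ≠ 0, 0 < ⟪T x, x⟫) :
    DenseRange T := by
  have horth : (LinearMap.range (T : E →ₗ[ℝ] E))ᗮ = ⊥ := by
    refine (Submodule.eq_bot_iff _).2 fun z hz => ?_
    by_contra hne
    have h0 : ⟪T z, z⟫ = 0 := (Submodule.mem_orthogonal _ _).1 hz _ ⟨z, rfl⟩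
    exact (hT z hne).ne' h0
  have hdense := Submodule.topologicalClosure_eq_top_iff.2 horth
  rw [← Submodule.dense_iff_topologicalClosure_eq_top] at hdense
  simpa only [LinearMap.coe_range, ContinuousLinearMap.coe_coe, DenseRange] using hdense

end ContinuousLinearMap

section Resolvent

variable {X X₁ : Type*} [NormedAddCommGroup X] [InnerProductSpace ℝ X]
  [NormedAddCommGroup X₁] [NormedSpace ℝ X₁] {ι : X₁ →L[ℝ] X}

theorem inner_comp_apply_self_of_rightInverse {A : X₁ →L[ℝ] X} {Ainv : X →L[ℝ] X₁}
    (hinv : ∀ x, A (Ainv x) = x) (x : X) :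
    ⟪(ι ∘L Ainv) x, x⟫ = ⟪A (Ainv x), ι (Ainv x)⟫ := by
  rw [hinv, real_inner_comm]
  rfl

theorem isPositive_comp_of_rightInverse {A : X₁ →L[ℝ] X} {Ainv : X →L[ℝ] X₁}
    (hsymm : ∀ ψ φ, ⟪A ψ, ι φ⟫ = ⟪ι ψ, A φ⟫) (hnonneg : ∀ ψ, 0 ≤ ⟪A ψ, ι ψ⟫)
    (hinv : ∀ x, A (Ainv x) = x) : (ι ∘L Ainv).IsPositive := by
  refine (ContinuousLinearMap.isPositive_iff _).2 ⟨fun x y => ?_, fun x => ?_⟩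
  · change ⟪ι (Ainv x), y⟫ = ⟪x, ι (Ainv y)⟫
    calc ⟪ι (Ainv x), y⟫ = ⟪ι (Ainv x), A (Ainv y)⟫ := by rw [hinv]
      _ = ⟪A (Ainv x), ι (Ainv y)⟫ := (hsymm _ _).symm
      _ = ⟪x, ι (Ainv y)⟫ := by rw [hinv]
  · rw [inner_comp_apply_self_of_rightInverse hinv]
    exact hnonneg _

theorem denseRange_comp_of_rightInverse [CompleteSpace X] {A : X₁ →L[ℝ] X} {Ainv : X →L[ℝ] X₁}
    (hinv : ∀ x, A (Ainv x) = x) (hpos : ∀ ψ ≠ 0, 0 < ⟪A ψ, ι ψ⟫) : DenseRange (ι ∘L Ainv) :=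
  ContinuousLinearMap.denseRange_of_inner_apply_self_pos fun x hx => by
    rw [inner_comp_apply_self_of_rightInverse hinv]
    refine hpos _ fun h => hx ?_
    rw [← hinv x, h, map_zero]

theorem inner_comp_apply_self_le_of_comparable {A₀ A : X₁ →L[ℝ] X} {Ainv₀ Ainv : X →L[ℝ] X₁}
    {m₀ m₁ : ℝ} (hm₀ : 0 < m₀) (hm₁ : 0 ≤ m₁) (hinv₀ : ∀ ψ, Ainv₀ (A₀ ψ) = ψ)
    (hinv : ∀ x, A (Ainv x) = x) (hR₀ : (ι ∘L Ainv₀).IsPositive)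
    (hlower : ∀ ψ, m₀ * ⟪A₀ ψ, ι ψ⟫ ≤ ⟪A ψ, ι ψ⟫) (hupper : ∀ ψ, ⟪A ψ, ι ψ⟫ ≤ m₁ * ⟪A₀ ψ, ι ψ⟫)
    (x : X) : ⟪(ι ∘L Ainv) x, x⟫ ≤ m₁ * ‖ι ∘L Ainv₀‖ / m₀ ^ 2 * ‖x‖ ^ 2 := by
  set ψ := Ainv x
  set q := ⟪A₀ ψ, ι ψ⟫
  have hR₀z : (ι ∘L Ainv₀) (A₀ ψ) = ι ψ := by simp [hinv₀]
  have hq : q = ⟪(ι ∘L Ainv₀) (A₀ ψ), A₀ ψ⟫ := by rw [hR₀z, real_inner_comm]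
  have hq₀ : 0 ≤ q := hq ▸ hR₀.inner_nonneg_left _
  have hιψ : ‖ι ψ‖ ^ 2 ≤ ‖ι ∘L Ainv₀‖ * q := hq ▸ hR₀z ▸ hR₀.norm_apply_sq_le (A₀ ψ)
  have hmq : m₀ * q ≤ ‖x‖ * ‖ι ψ‖ :=
    calc m₀ * q ≤ ⟪A ψ, ι ψ⟫ := hlower ψ
      _ = ⟪x, ι ψ⟫ := by rw [hinv]
      _ ≤ ‖x‖ * ‖ι ψ‖ := real_inner_le_norm _ _
  have hq_le : m₀ ^ 2 * q ≤ ‖ι ∘L Ainv₀‖ * ‖x‖ ^ 2 := by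
    rcases hq₀.eq_or_lt with h0 | hpos
    · rw [← h0, mul_zero]; positivity
    · refine le_of_mul_le_mul_right ?_ hpos
      nlinarith [mul_le_mul hmq hmq (by positivity) (by positivity), sq_nonneg ‖x‖]
  rw [inner_comp_apply_self_of_rightInverse hinv, div_mul_eq_mul_div, le_div_iff₀ (by positivity)]
  nlinarith [hupper ψ]

end Resolvent

theorem integral_norm_lt_of_eLpNorm_one_lt {β F : Type*} [MeasurableSpace β]
    [NormedAddCommGroup F] {μ : Measure β} {f : β → F} (hf : AEStronglyMeasurable f μ) {ε : ℝ}
    (h : eLpNorm f 1 μ < ENNReal.ofReal ε) : ∫ x, ‖f x‖ ∂μ < ε := by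
  rw [eLpNorm_one_eq_lintegral_enorm] at h
  exact integral_norm_eq_lintegral_enorm hf ▸ ENNReal.toReal_lt_of_lt_ofReal h

theorem MeasureTheory.Integrable.exists_simpleFunc_integral_norm_sub_lt {β F : Type*}
    [MeasurableSpace β] [NormedAddCommGroup F] {μ : Measure β} {f : β → F} (hf : Integrable f μ)
    {ε : ℝ} (hε : 0 < ε) : ∃ g : SimpleFunc β F, ∫ x, ‖f x - g x‖ ∂μ < ε ∧ Integrable g μ := by
  obtain ⟨g, hlt, hg⟩ := (memLp_one_iff_integrable.2 hf).exists_simpleFunc_eLpNorm_sub_lt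
    ENNReal.one_ne_top (ENNReal.ofReal_pos.2 hε).ne'
  have hg' := memLp_one_iff_integrable.1 hg
  exact ⟨g, integral_norm_lt_of_eLpNorm_one_lt (hf.sub hg').aestronglyMeasurable hlt, hg'⟩

theorem tendsto_eLpNorm_one_comp_of_tendsto_eLpNorm_top {α β E F : Type*} {l : Filter α}
    [MeasurableSpace β] [NormedAddCommGroup E] [NormedSpace ℝ E] [NormedAddCommGroup F]
    [NormedSpace ℝ F] (L : E →L[ℝ] F) {f : α → β → E} {μ ν : Measure β} [IsFiniteMeasure μ]
    (hμν : μ ≤ ν)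
    (hf : Tendsto (fun i => eLpNorm (f i) ∞ ν) l (𝓝 0)) :
    Tendsto (fun i => eLpNorm (fun x => L (f i x)) 1 μ) l (𝓝 0) := by
  have hbound : ∀ i, eLpNorm (fun x => L (f i x)) 1 μ ≤ ‖L‖₊ * (eLpNorm (f i) ∞ ν * μ univ) :=
    fun i => calc
      eLpNorm (fun x => L (f i x)) 1 μ ≤ ‖L‖₊ * eLpNorm (f i) 1 μ :=
        eLpNorm_le_mul_eLpNorm_of_ae_le_mul' (ae_of_all _ fun x => L.le_opENorm (f i x)) 1
      _ ≤ ‖L‖₊ * (eLpNorm (f i) ∞ μ * μ univ) := by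
        gcongr
        simpa [eLpNorm_eq_eLpNorm' one_ne_zero ENNReal.one_ne_top, eLpNorm_exponent_top] using
          eLpNorm'_le_eLpNormEssSup_mul_rpow_measure_univ (f := f i) (μ := μ) one_pos
      _ ≤ ‖L‖₊ * (eLpNorm (f i) ∞ ν * μ univ) := by gcongr
  have hlim : Tendsto (fun i => (‖L‖₊ : ℝ≥0∞) * (eLpNorm (f i) ∞ ν * μ univ)) l (𝓝 0) := by
    simpa using ENNReal.Tendsto.const_mul (ENNReal.Tendsto.mul_const hf
      (Or.inr (measure_ne_top μ univ))) (Or.inr ENNReal.coe_ne_top)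
  exact tendsto_of_tendsto_of_tendsto_of_le_of_le tendsto_const_nhds hlim (fun _ => zero_le)
    hbound

theorem hasDerivAt_sub_smul_of_continuousAt {F : Type*} [NormedAddCommGroup F] [NormedSpace ℝ F]
    {φ : ℝ → F} {σ : ℝ} (hφ : ContinuousAt φ σ) :
    HasDerivAt (fun r => (r - σ) • φ r) (φ σ) σ := by
  rw [hasDerivAt_iff_tendsto_slope]
  refine (hφ.tendsto.mono_left nhdsWithin_le_nhds).congr' ?_
  filter_upwards [self_mem_nhdsWithin] with r hr
  rw [slope_def_module, sub_self, zero_smul, sub_zero, smul_smul,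
    inv_mul_cancel₀ (sub_ne_zero.2 hr), one_smul]

theorem hasDerivAt_apply_of_norm_le {E F : Type*} [NormedAddCommGroup E] [NormedSpace ℝ E]
    [NormedAddCommGroup F] [NormedSpace ℝ F] {U : ℝ → E →L[ℝ] F} {g : ℝ → E} {g' : E} {D : F}
    {σ C : ℝ} (hU : ∀ᶠ r in 𝓝 σ, ‖U r‖ ≤ C) (hUg' : ContinuousAt (fun r => U r g') σ)
    (hg : HasDerivAt g g' σ) (hD : HasDerivAt (fun r => U r (g σ)) D σ) :
    HasDerivAt (fun r => U r (g r)) (U σ g' + D) σ := by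
  -- `U r (g r) = U r (g r - g σ - (r - σ) • g') + (r - σ) • U r g' + U r (g σ)`, and the first
  -- term is `o(r - σ)` because `U` is locally bounded
  have hrem : HasDerivAt (fun r => U r (g r - g σ - (r - σ) • g')) 0 σ := by
    rw [hasDerivAt_iff_isLittleO]
    have hbigO : (fun r => U r (g r - g σ - (r - σ) • g')) =O[𝓝 σ]
        fun r => g r - g σ - (r - σ) • g' :=
      Asymptotics.IsBigO.of_bound C <| hU.mono fun r hr => (U r).le_of_opNorm_le hr _
    simpa using hbigO.trans_isLittleO (hasDerivAt_iff_isLittleO.1 hg)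
  have hsum := (hrem.add (hasDerivAt_sub_smul_of_continuousAt hUg')).add hD
  rw [zero_add] at hsum
  convert hsum using 1
  funext r
  simp only [Pi.add_apply, map_sub, map_smul]
  abel

section Semigroup

variable {E : Type*} [NormedAddCommGroup E] [NormedSpace ℝ E]

structure IsContractionSemigroup (S : ℝ → E →L[ℝ] E) : Prop where
  map_zero : S 0 = 1
  map_add : ∀ s t, 0 ≤ s → 0 ≤ t → S (s + t) = S s ∘L S t
  continuous_apply : ∀ x, Continuous fun t => S t x
  norm_le_one : ∀ t, 0 ≤ t → ‖S t‖ ≤ 1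

/-- `R = A⁻¹` for the generator `-A` of `S`. -/
def IsGeneratorInverse (S : ℝ → E →L[ℝ] E) (R : E →L[ℝ] E) : Prop :=
  ∀ x t, 0 < t → HasDerivAt (fun r => S r (R x)) (-S t x) t

namespace IsContractionSemigroup

variable {S : ℝ → E →L[ℝ] E}

theorem norm_apply_le (hS : IsContractionSemigroup S) {t : ℝ} (ht : 0 ≤ t) (x : E) :
    ‖S t x‖ ≤ ‖x‖ := by
  simpa using (S t).le_of_opNorm_le (hS.norm_le_one t ht) x

theorem continuous_max_apply (hS : IsContractionSemigroup S) :
    Continuous fun p : ℝ × E => S (max p.1 0) p.2 :=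
  continuous_prod_of_continuous_lipschitzWith' _ 1
    (fun t => (S (max t 0)).lipschitz.weaken (mod_cast hS.norm_le_one _ (le_max_right t 0)))
    (fun x => (hS.continuous_apply x).comp (continuous_id.max continuous_const))

theorem continuousOn_apply_sub (hS : IsContractionSemigroup S) (s : ℝ) {g : ℝ → E}
    (hg : Continuous g) :
    ContinuousOn (fun σ => S (s - σ) (g σ)) (Iic s) := by
  have hsub : Continuous fun σ : ℝ => s - σ := continuous_const.sub continuous_id
  refine (hS.continuous_max_apply.comp (hsub.prodMk hg)).continuousOn.congr fun σ hσ => ?_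
  simp [max_eq_left (sub_nonneg.2 (mem_Iic.1 hσ))]

end IsContractionSemigroup

namespace IsGeneratorInverse

variable [CompleteSpace E] {S : ℝ → E →L[ℝ] E} {R : E →L[ℝ] E}

theorem integral_apply_eq (hR : IsGeneratorInverse S R) (hS : IsContractionSemigroup S)
    {t : ℝ} (ht : 0 ≤ t) (x : E) : ∫ r in 0..t, S r x = R x - S t (R x) := by
  have hftc := intervalIntegral.integral_eq_sub_of_hasDeriv_right_of_le ht
    (hS.continuous_apply (R x)).continuousOn
    (fun r hr => (hR x r hr.1).hasDerivWithinAt)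
    ((hS.continuous_apply x).neg.intervalIntegrable 0 t)
  rw [intervalIntegral.integral_neg, hS.map_zero, one_apply_eq_self] at hftc
  rw [← neg_neg (∫ r in 0..t, S r x), hftc, neg_sub]

theorem eq_zero_of_forall_apply_eq_self (hR : IsGeneratorInverse S R)
    (hS : IsContractionSemigroup S) {w : E} (hw : ∀ s, 0 ≤ s → S s w = w) : w = 0 := by
  -- `s • w = R w - S s (R w)` stays bounded as `s → ∞`
  have hsmul : ∀ s, 0 ≤ s → s • w = R w - S s (R w) := fun s hs => by
    rw [← hR.integral_apply_eq hS hs, intervalIntegral.integral_congr (g := fun _ => w)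
      (fun r hr => hw r (by simpa [hs] using hr.1)), intervalIntegral.integral_const, sub_zero]
  by_contra hne
  have hpos : 0 < ‖w‖ := norm_pos_iff.2 hne
  set s := 2 * ‖R‖ + 1
  have hs : 0 ≤ s := by positivity
  have hle : s * ‖w‖ ≤ 2 * ‖R‖ * ‖w‖ :=
    calc s * ‖w‖ = ‖R w - S s (R w)‖ := by
          rw [← hsmul s hs, norm_smul, Real.norm_of_nonneg hs]
      _ ≤ ‖R w‖ + ‖R w‖ := (norm_sub_le _ _).trans (by gcongr; exact hS.norm_apply_le hs _)
      _ ≤ 2 * ‖R‖ * ‖w‖ := by linarith [R.le_opNorm w]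
  nlinarith

theorem apply_comm (hR : IsGeneratorInverse S R) (hS : IsContractionSemigroup S)
    {σ : ℝ} (hσ : 0 ≤ σ) (z : E) : R (S σ z) = S σ (R z) := by
  refine sub_eq_zero.1 (hR.eq_zero_of_forall_apply_eq_self hS fun s hs => ?_)
  have hshift : ∫ r in 0..s, S r (S σ z) = ∫ r in σ..s + σ, S r z := by
    have hcomp := intervalIntegral.integral_comp_add_right (fun r => S r z) σ (a := 0) (b := s)
    rw [zero_add] at hcomp
    rw [← hcomp]
    refine intervalIntegral.integral_congr fun r hr => ?_
    rw [uIcc_of_le hs] at hr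
    simp [hS.map_add r σ hr.1 hσ]
  have hint : ∀ b, IntervalIntegrable (fun r => S r z) volume 0 b :=
    fun b => (hS.continuous_apply z).intervalIntegrable 0 b
  have htail : ∫ r in σ..s + σ, S r z = S σ (R z) - S s (S σ (R z)) := by
    rw [← intervalIntegral.integral_interval_sub_left (hint _) (hint σ),
      hR.integral_apply_eq hS (by positivity), hR.integral_apply_eq hS hσ, hS.map_add s σ hs hσ,
      ContinuousLinearMap.comp_apply]
    abel
  have key := (hR.integral_apply_eq hS hs (S σ z)).symm.trans (hshift.trans htail)
  rw [map_sub]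
  exact (sub_eq_sub_iff_sub_eq_sub.1 key).symm

theorem duhamel {S₀ : ℝ → E →L[ℝ] E} {R₀ : E →L[ℝ] E} (hR : IsGeneratorInverse S R)
    (hS : IsContractionSemigroup S) (hR₀ : IsGeneratorInverse S₀ R₀)
    (hS₀ : IsContractionSemigroup S₀) {s : ℝ} (hs : 0 ≤ s) (y : E) :
    R (S₀ s (R₀ y)) - S s (R (R₀ y)) = ∫ σ in 0..s, S (s - σ) (R₀ (S₀ σ y) - R (S₀ σ y)) := by
  set g : ℝ → E := fun σ => R (S₀ σ (R₀ y))
  have hg : Continuous g := R.continuous.comp (hS₀.continuous_apply _)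
  have hsub : Continuous fun r : ℝ => s - r := continuous_const.sub continuous_id
  have hderiv : ∀ σ ∈ Ioo 0 s, HasDerivAt (fun σ => S (s - σ) (g σ))
      (S (s - σ) (R₀ (S₀ σ y) - R (S₀ σ y))) σ := by
    intro σ hσ
    have hU : ∀ᶠ r in 𝓝 σ, ‖S (s - r)‖ ≤ 1 :=
      (eventually_lt_nhds hσ.2).mono fun r hr => hS.norm_le_one _ (by linarith)
    have hUc : ContinuousAt (fun r => S (s - r) (R (-S₀ σ y))) σ :=
      ((hS.continuous_apply _).comp hsub).continuousAt
    have hg' : HasDerivAt g (R (-S₀ σ y)) σ := R.hasFDerivAt.comp_hasDerivAt σ (hR₀ y σ hσ.1)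
    have hD : HasDerivAt (fun r => S (s - r) (g σ)) (S (s - σ) (S₀ σ (R₀ y))) σ := by
      simpa [Function.comp_def] using (hR (S₀ σ (R₀ y)) (s - σ) (sub_pos.2 hσ.2)).scomp σ
        ((hasDerivAt_id σ).const_sub s)
    convert hasDerivAt_apply_of_norm_le hU hUc hg' hD using 1
    rw [← hR₀.apply_comm hS₀ hσ.1.le, ← map_add, map_neg, neg_add_eq_sub]
  have hint : IntervalIntegrable (fun σ => S (s - σ) (R₀ (S₀ σ y) - R (S₀ σ y))) volume 0 s := by
    refine ContinuousOn.intervalIntegrable ((hS.continuousOn_apply_sub s ?_).mono ?_)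
    · exact (R₀.continuous.comp (hS₀.continuous_apply y)).sub
        (R.continuous.comp (hS₀.continuous_apply y))
    · rw [uIcc_of_le hs]; exact Icc_subset_Iic_self
  rw [intervalIntegral.integral_eq_sub_of_hasDeriv_right_of_le hs
    ((hS.continuousOn_apply_sub s hg).mono Icc_subset_Iic_self)
    (fun σ hσ => (hderiv σ hσ).hasDerivWithinAt) hint]
  simp [g, hS.map_zero, hS₀.map_zero]

end IsGeneratorInverse

section TrotterKato

variable {α : Type*} {l : Filter α}

theorem tendstoLocallyUniformly_of_tendsto_of_norm_le {F : Type*} [NormedAddCommGroup F]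
    [NormedSpace ℝ F] {T : α → E →L[ℝ] F} {T₀ : E →L[ℝ] F} {M : ℝ}
    (hbound : ∀ᶠ i in l, ∀ x, ‖T i x‖ ≤ M * ‖x‖)
    (hlim : ∀ x, Tendsto (fun i => T i x) l (𝓝 (T₀ x))) :
    TendstoLocallyUniformly (fun i => ⇑(T i)) T₀ l := by
  rw [Metric.tendstoLocallyUniformly_iff]
  intro δ hδ x
  set K := ‖T₀‖ + |M| + 1
  set r := δ / (2 * K)
  have hK : 0 < K := by positivity
  have hr : 0 < r := by positivity
  refine ⟨Metric.ball x r, Metric.ball_mem_nhds x hr, ?_⟩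
  filter_upwards [hbound, Metric.tendsto_nhds.1 (hlim x) (δ / 2) (by positivity)]
    with i hTi hTix y hy
  rw [Metric.mem_ball, dist_eq_norm] at hy
  have h₁ : ‖T₀ (y - x)‖ ≤ ‖T₀‖ * r :=
    (T₀.le_opNorm _).trans (mul_le_mul_of_nonneg_left hy.le (norm_nonneg _))
  have h₂ : ‖T₀ x - T i x‖ < δ / 2 := by rwa [dist_comm, dist_eq_norm] at hTix
  have h₃ : ‖T i (x - y)‖ ≤ |M| * r := by
    refine (hTi _).trans ?_
    rw [norm_sub_rev]
    exact mul_le_mul (le_abs_self M) hy.le (norm_nonneg _) (abs_nonneg M)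
  have hKr : (‖T₀‖ + |M|) * r ≤ δ / 2 :=
    calc (‖T₀‖ + |M|) * r ≤ K * r := by gcongr; linarith
      _ = δ / 2 := by simp only [r]; field_simp
  have hsplit : T₀ y - T i y = T₀ (y - x) + (T₀ x - T i x) + T i (x - y) := by
    simp only [map_sub]; abel
  rw [dist_eq_norm, hsplit]
  linarith [norm_add₃_le (a := T₀ (y - x)) (b := T₀ x - T i x) (c := T i (x - y))]

theorem tendstoUniformlyOn_apply_of_dense {β F : Type*} [NormedAddCommGroup F]
    [NormedSpace ℝ F] {T : α → β → E →L[ℝ] F} {T₀ : β → E →L[ℝ] F} {s : Set β} {C : ℝ}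
    (hT : ∀ᶠ i in l, ∀ t ∈ s, ‖T i t‖ ≤ C) (hT₀ : ∀ t ∈ s, ‖T₀ t‖ ≤ C) {D : Set E}
    (hD : Dense D) (hlim : ∀ y ∈ D, TendstoUniformlyOn (fun i t => T i t y) (fun t => T₀ t y) l s)
    (x : E) : TendstoUniformlyOn (fun i t => T i t x) (fun t => T₀ t x) l s := by
  rw [Metric.tendstoUniformlyOn_iff]
  intro δ hδ
  set K := |C| + 1
  have hK : 0 < K := by positivity
  obtain ⟨y, hyD, hxy⟩ := Metric.mem_closure_iff.1 (hD x) (δ / (3 * K)) (by positivity)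
  rw [dist_eq_norm] at hxy
  filter_upwards [hT, Metric.tendstoUniformlyOn_iff.1 (hlim y hyD) (δ / 3) (by positivity)]
    with i hTi hiy t ht
  have hbound : ∀ A : E →L[ℝ] F, ‖A‖ ≤ C → ∀ v : E, ‖v‖ < δ / (3 * K) → ‖A v‖ ≤ δ / 3 :=
    fun A hA v hv => calc
      ‖A v‖ ≤ |C| * ‖v‖ := (A.le_opNorm v).trans (by gcongr; exact hA.trans (le_abs_self C))
      _ ≤ K * (δ / (3 * K)) := by gcongr; · linarith
      _ = δ / 3 := by field_simp
  have hsplit : T₀ t x - T i t x = T₀ t (x - y) + (T₀ t y - T i t y) + T i t (y - x) := by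
    simp only [map_sub]; abel
  rw [dist_eq_norm, hsplit]
  have h₁ := hbound _ (hT₀ t ht) _ hxy
  have h₂ : ‖T₀ t y - T i t y‖ < δ / 3 := by rw [← dist_eq_norm]; exact hiy t ht
  have h₃ := hbound _ (hTi t ht) (y - x) (by rwa [norm_sub_rev])
  linarith [norm_add₃_le (a := T₀ t (x - y)) (b := T₀ t y - T i t y) (c := T i t (y - x))]

theorem tendstoUniformlyOn_semigroup_apply_resolvent_sq [CompleteSpace E]
    {S : α → ℝ → E →L[ℝ] E} {R : α → E →L[ℝ] E} {S₀ : ℝ → E →L[ℝ] E} {R₀ : E →L[ℝ] E}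
    (hS : ∀ᶠ i in l, IsContractionSemigroup (S i))
    (hR : ∀ᶠ i in l, IsGeneratorInverse (S i) (R i)) (hS₀ : IsContractionSemigroup S₀)
    (hR₀ : IsGeneratorInverse S₀ R₀) {τ : ℝ}
    (horbit : ∀ z, TendstoUniformlyOn (fun i σ => R i (S₀ σ z)) (fun σ => R₀ (S₀ σ z)) l
      (Icc 0 τ)) (y : E) :
    TendstoUniformlyOn (fun i t => S i t (R₀ (R₀ y))) (fun t => S₀ t (R₀ (R₀ y))) l (Icc 0 τ) := by
  rw [Metric.tendstoUniformlyOn_iff]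
  intro δ hδ
  set η := δ / (|τ| + 2)
  have hη : 0 < η := by positivity
  filter_upwards [hS, hR, Metric.tendstoUniformlyOn_iff.1 (horbit y) η hη,
    Metric.tendstoUniformlyOn_iff.1 (horbit (R₀ y)) η hη] with i hSi hRi hy hR₀y t ht
  have hsplit : S₀ t (R₀ (R₀ y)) - S i t (R₀ (R₀ y))
      = (R₀ (S₀ t (R₀ y)) - R i (S₀ t (R₀ y))) + (R i (S₀ t (R₀ y)) - S i t (R i (R₀ y)))
        + S i t (R i (R₀ y) - R₀ (R₀ y)) := by
    rw [← hR₀.apply_comm hS₀ ht.1, map_sub]; abel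
  have h₁ : ‖R₀ (S₀ t (R₀ y)) - R i (S₀ t (R₀ y))‖ < η := by
    rw [← dist_eq_norm]; exact hR₀y t ht
  have h₂ : ‖R i (S₀ t (R₀ y)) - S i t (R i (R₀ y))‖ ≤ η * t := by
    rw [hRi.duhamel hSi hR₀ hS₀ ht.1 y]
    refine (intervalIntegral.norm_integral_le_of_norm_le_const fun σ hσ => ?_).trans_eq
      (by rw [sub_zero, abs_of_nonneg ht.1])
    rw [uIoc_of_le ht.1] at hσ
    refine (hSi.norm_apply_le (sub_nonneg.2 hσ.2) _).trans ?_
    rw [← dist_eq_norm]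
    exact (hy σ ⟨hσ.1.le, hσ.2.trans ht.2⟩).le
  have h₃ : ‖S i t (R i (R₀ y) - R₀ (R₀ y))‖ < η := by
    refine (hSi.norm_apply_le ht.1 _).trans_lt ?_
    simpa [hS₀.map_zero, dist_eq_norm, norm_sub_rev] using hR₀y 0 ⟨le_rfl, ht.1.trans ht.2⟩
  have hηt : η * t + 2 * η ≤ δ :=
    calc η * t + 2 * η ≤ η * (|τ| + 2) := by nlinarith [le_abs_self τ, ht.2]
      _ = δ := by simp only [η]; field_simp
  rw [dist_eq_norm, hsplit]
  linarith [norm_add₃_le (a := R₀ (S₀ t (R₀ y)) - R i (S₀ t (R₀ y)))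
    (b := R i (S₀ t (R₀ y)) - S i t (R i (R₀ y))) (c := S i t (R i (R₀ y) - R₀ (R₀ y)))]

theorem tendstoUniformlyOn_semigroup_apply_of_tendsto_resolvent [CompleteSpace E]
    {S : α → ℝ → E →L[ℝ] E} {R : α → E →L[ℝ] E} {S₀ : ℝ → E →L[ℝ] E} {R₀ : E →L[ℝ] E}
    {M : ℝ} (hS : ∀ᶠ i in l, IsContractionSemigroup (S i))
    (hR : ∀ᶠ i in l, IsGeneratorInverse (S i) (R i)) (hS₀ : IsContractionSemigroup S₀)
    (hR₀ : IsGeneratorInverse S₀ R₀) (hbound : ∀ᶠ i in l, ∀ x, ‖R i x‖ ≤ M * ‖x‖)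
    (hlim : ∀ x, Tendsto (fun i => R i x) l (𝓝 (R₀ x))) (hdense : DenseRange R₀) (τ : ℝ)
    (x : E) : TendstoUniformlyOn (fun i t => S i t x) (fun t => S₀ t x) l (Icc 0 τ) := by
  have horbit (z : E) : TendstoUniformlyOn (fun i σ => R i (S₀ σ z)) (fun σ => R₀ (S₀ σ z)) l
      (Icc 0 τ) :=
    (tendstoLocallyUniformlyOn_iff_tendstoUniformlyOn_of_compact isCompact_Icc).1
      ((tendstoLocallyUniformly_of_tendsto_of_norm_le hbound hlim).comp _
        (hS₀.continuous_apply z)).tendstoLocallyUniformlyOn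
  refine tendstoUniformlyOn_apply_of_dense (C := 1)
    (hS.mono fun i hSi t ht => hSi.norm_le_one t ht.1) (fun t ht => hS₀.norm_le_one t ht.1)
    (hdense.comp hdense R₀.continuous) ?_ x
  rintro _ ⟨y, rfl⟩
  exact tendstoUniformlyOn_semigroup_apply_resolvent_sq hS hR hS₀ hR₀ horbit y

end TrotterKato

/-- The input map `Φ_t` of the paper, applied to `f = B u`. -/
noncomputable def inputMap (S : ℝ → E →L[ℝ] E) (f : ℝ → E) (t : ℝ) : E :=
  ∫ σ in Ioc 0 t, S (t - σ) (f σ)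

namespace IsContractionSemigroup

variable {S : ℝ → E →L[ℝ] E} {f g : ℝ → E} {t : ℝ}

theorem integrableOn_apply_sub (hS : IsContractionSemigroup S) (hf : IntegrableOn f (Ioc 0 t)) :
    IntegrableOn (fun σ => S (t - σ) (f σ)) (Ioc 0 t) := by
  have hmeas : AEStronglyMeasurable (fun σ => S (max (t - σ) 0) (f σ))
      (volume.restrict (Ioc 0 t)) :=
    hS.continuous_max_apply.comp_aestronglyMeasurable
      ((continuous_const.sub continuous_id).aestronglyMeasurable.prodMk hf.aestronglyMeasurable)
  refine hf.norm.mono' (hmeas.congr ?_) ?_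
  · filter_upwards [ae_restrict_mem measurableSet_Ioc] with σ hσ
    rw [max_eq_left (sub_nonneg.2 hσ.2)]
  · filter_upwards [ae_restrict_mem measurableSet_Ioc] with σ hσ
    exact hS.norm_apply_le (sub_nonneg.2 hσ.2) _

theorem inputMap_sub (hS : IsContractionSemigroup S) (hf : IntegrableOn f (Ioc 0 t))
    (hg : IntegrableOn g (Ioc 0 t)) :
    inputMap S (fun σ => f σ - g σ) t = inputMap S f t - inputMap S g t := by
  simp only [inputMap, map_sub]
  exact integral_sub (hS.integrableOn_apply_sub hf) (hS.integrableOn_apply_sub hg)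

theorem norm_inputMap_le (hS : IsContractionSemigroup S) {τ : ℝ} (htτ : t ≤ τ)
    (hf : IntegrableOn f (Ioc 0 τ)) : ‖inputMap S f t‖ ≤ ∫ σ in Ioc 0 τ, ‖f σ‖ := by
  have hsub : Ioc 0 t ⊆ Ioc 0 τ := Ioc_subset_Ioc_right htτ
  refine (norm_integral_le_of_norm_le (hf.mono_set hsub).norm ?_).trans
    (setIntegral_mono_set hf.norm (ae_of_all _ fun _ => norm_nonneg _) hsub.eventuallyLE)
  filter_upwards [ae_restrict_mem measurableSet_Ioc] with σ hσ
  exact hS.norm_apply_le (sub_nonneg.2 hσ.2) _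

end IsContractionSemigroup

theorem tendstoUniformlyOn_inputMap {α : Type*} {l : Filter α} {S : α → ℝ → E →L[ℝ] E}
    {S₀ : ℝ → E →L[ℝ] E} {v : α → ℝ → E} {v₀ : ℝ → E} {τ : ℝ}
    (hS : ∀ᶠ i in l, IsContractionSemigroup (S i)) (hS₀ : IsContractionSemigroup S₀)
    (hSlim : ∀ x, TendstoUniformlyOn (fun i t => S i t x) (fun t => S₀ t x) l (Icc 0 τ))
    (hv : ∀ᶠ i in l, IntegrableOn (v i) (Ioc 0 τ)) (hv₀ : IntegrableOn v₀ (Ioc 0 τ))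
    (hvlim : Tendsto (fun i => eLpNorm (v i - v₀) 1 (volume.restrict (Ioc 0 τ))) l (𝓝 0)) :
    TendstoUniformlyOn (fun i => inputMap (S i) (v i)) (inputMap S₀ v₀) l (Icc 0 τ) := by
  rw [Metric.tendstoUniformlyOn_iff]
  intro δ hδ
  obtain ⟨g, hv₀g, hg⟩ := Integrable.exists_simpleFunc_integral_norm_sub_lt hv₀ (ε := δ / 4)
    (by positivity)
  replace hg : IntegrableOn g (Ioc 0 τ) := hg
  set η := δ / (4 * (|τ| + 1))
  have hη : 0 < η := by positivity
  have hSg : ∀ᶠ i in l, ∀ x ∈ range g, ∀ t ∈ Icc 0 τ, ‖S₀ t x - S i t x‖ < η :=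
    (eventually_all_finite g.finite_range).2 fun x _ => by
      simpa only [dist_eq_norm] using Metric.tendstoUniformlyOn_iff.1 (hSlim x) η hη
  have hvv₀ : ∀ᶠ i in l, ∫ σ in Ioc 0 τ, ‖v i σ - v₀ σ‖ < δ / 4 := by
    have hδ₄ : 0 < ENNReal.ofReal (δ / 4) := ENNReal.ofReal_pos.2 (by positivity)
    filter_upwards [hv, hvlim.eventually (gt_mem_nhds hδ₄)] with i hvi hlt
    exact integral_norm_lt_of_eLpNorm_one_lt (hvi.sub hv₀).aestronglyMeasurable hlt
  filter_upwards [hS, hv, hSg, hvv₀] with i hSi hvi hSgi hvv₀i t ht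
  have hsub : Ioc 0 t ⊆ Ioc 0 τ := Ioc_subset_Ioc_right ht.2
  have hsplit : inputMap S₀ v₀ t - inputMap (S i) (v i) t
      = inputMap S₀ (fun σ => v₀ σ - g σ) t - inputMap (S i) (fun σ => v₀ σ - g σ) t
        + (inputMap S₀ g t - inputMap (S i) g t)
        - inputMap (S i) (fun σ => v i σ - v₀ σ) t := by
    rw [hS₀.inputMap_sub (hv₀.mono_set hsub) (hg.mono_set hsub),
      hSi.inputMap_sub (hv₀.mono_set hsub) (hg.mono_set hsub),
      hSi.inputMap_sub (hvi.mono_set hsub) (hv₀.mono_set hsub)]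
    abel
  have h₁ := hS₀.norm_inputMap_le (f := fun σ => v₀ σ - g σ) ht.2 (hv₀.sub hg)
  have h₂ := hSi.norm_inputMap_le (f := fun σ => v₀ σ - g σ) ht.2 (hv₀.sub hg)
  have h₃ : ‖inputMap S₀ g t - inputMap (S i) g t‖ ≤ δ / 4 := by
    rw [inputMap, inputMap, ← integral_sub (hS₀.integrableOn_apply_sub (hg.mono_set hsub))
      (hSi.integrableOn_apply_sub (hg.mono_set hsub))]
    refine (norm_setIntegral_le_of_norm_le_const measure_Ioc_lt_top fun σ hσ =>
      (hSgi _ (mem_range_self σ) _ ⟨sub_nonneg.2 hσ.2, by linarith [hσ.1, ht.2]⟩).le).trans ?_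
    rw [Real.volume_real_Ioc_of_le ht.1, sub_zero]
    calc η * t ≤ η * (|τ| + 1) := by gcongr; linarith [le_abs_self τ, ht.2]
      _ = δ / 4 := by simp only [η]; field_simp
  have h₄ := hSi.norm_inputMap_le (f := fun σ => v i σ - v₀ σ) ht.2 (hvi.sub hv₀)
  rw [dist_eq_norm, hsplit]
  refine (norm_sub_le _ _).trans_lt ((add_le_add_left ((norm_add_le _ _).trans
    (add_le_add_left (norm_sub_le _ _) _)) _).trans_lt ?_)
  linarith

end Semigroup

theorem stmt4_general {X X₁ U : Type*}
    [NormedAddCommGroup X] [InnerProductSpace ℝ X] [CompleteSpace X]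
    [NormedAddCommGroup X₁] [NormedSpace ℝ X₁]
    [NormedAddCommGroup U] [InnerProductSpace ℝ U]
    -- (C1): common domain `X₁` compactly embedded in `X`, each `A_ε` self-adjoint
    (ι : X₁ →L[ℝ] X)
    (A : ℝ → X₁ →L[ℝ] X)
    (hsa : ∀ ε : ℝ, 0 ≤ ε → ∀ ψ φ : X₁, ⟪A ε ψ, ι φ⟫ = ⟪ι ψ, A ε φ⟫)
    -- (C2): `A₀` strictly positive and `m₀⟨A₀ψ,ψ⟩ ≤ ⟨A_εψ,ψ⟩ ≤ m₁⟨A₀ψ,ψ⟩`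
    (m₀ m₁ : ℝ) (hm₀ : 0 < m₀) (hm₁ : 0 < m₁)
    (hpos : ∀ ψ : X₁, ψ ≠ 0 → 0 < ⟪A 0 ψ, ι ψ⟫)
    (hcomp : ∀ ε : ℝ, 0 ≤ ε → ∀ ψ : X₁,
      m₀ * ⟪A 0 ψ, ι ψ⟫ ≤ ⟪A ε ψ, ι ψ⟫ ∧ ⟪A ε ψ, ι ψ⟫ ≤ m₁ * ⟪A 0 ψ, ι ψ⟫)
    -- (C3): strong convergence of the resolvents `A_ε⁻¹ψ → A₀⁻¹ψ`
    (Ainv : ℝ → X →L[ℝ] X₁)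
    (hAinv : ∀ ε : ℝ, 0 ≤ ε → (∀ x : X, A ε (Ainv ε x) = x) ∧ ∀ ψ : X₁, Ainv ε (A ε ψ) = ψ)
    (hres : ∀ x : X, Tendsto (fun ε => ι (Ainv ε x)) (nhdsWithin 0 (Set.Ioi 0))
      (nhds (ι (Ainv 0 x))))
    -- `T^ε` is the contraction semigroup generated by `-A_ε`
    (T : ℝ → ℝ → X →L[ℝ] X)
    (hT0 : ∀ ε : ℝ, 0 ≤ ε → T ε 0 = 1)
    (hTadd : ∀ ε : ℝ, 0 ≤ ε → ∀ s t : ℝ, 0 ≤ s → 0 ≤ t → T ε (s + t) = (T ε s).comp (T ε t))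
    (hTcont : ∀ ε : ℝ, 0 ≤ ε → ∀ x : X, Continuous fun t => T ε t x)
    (hTcontr : ∀ ε : ℝ, 0 ≤ ε → ∀ t : ℝ, 0 ≤ t → ‖T ε t‖ ≤ 1)
    (hgen : ∀ ε : ℝ, 0 ≤ ε → ∀ ψ : X₁, ∀ t : ℝ, 0 ≤ t →
      HasDerivAt (fun s => T ε s (ι ψ)) (-(T ε t (A ε ψ))) t)
    -- control operator `B` and controls `u_ε → u_0` strongly in `L^∞((0,∞);U)`
    (B : U →L[ℝ] X) (u : ℝ → ℝ → U)
    (hu_mem : ∀ ε : ℝ, 0 ≤ ε → MemLp (u ε) ⊤ (volume.restrict (Set.Ioi 0)))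
    (hu_conv : Tendsto (fun ε => eLpNorm (fun t => u ε t - u 0 t) ⊤
      (volume.restrict (Set.Ioi 0))) (nhdsWithin 0 (Set.Ioi 0)) (nhds 0)) :
    ∀ τ : ℝ, 0 < τ →
      TendstoUniformlyOn
        (fun ε t => ∫ σ in Set.Ioc 0 t, T ε (t - σ) (B (u ε σ)))
        (fun t => ∫ σ in Set.Ioc 0 t, T 0 (t - σ) (B (u 0 σ)))
        (nhdsWithin 0 (Set.Ioi 0)) (Set.Icc 0 τ) := by
  intro τ _
  set R : ℝ → X →L[ℝ] X := fun ε => ι ∘L Ainv ε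
  have hnonneg₀ : ∀ ψ, 0 ≤ ⟪A 0 ψ, ι ψ⟫ := fun ψ => by
    rcases eq_or_ne ψ 0 with rfl | hψ
    · simp
    · exact (hpos ψ hψ).le
  have hRpos : ∀ ε, 0 ≤ ε → (R ε).IsPositive := fun ε hε =>
    isPositive_comp_of_rightInverse (hsa ε hε)
      (fun ψ => (mul_nonneg hm₀.le (hnonneg₀ ψ)).trans (hcomp ε hε ψ).1) (hAinv ε hε).1
  have hRbound : ∀ ε, 0 ≤ ε → ∀ x, ‖R ε x‖ ≤ m₁ * ‖R 0‖ / m₀ ^ 2 * ‖x‖ := fun ε hε =>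
    (hRpos ε hε).norm_apply_le_of_inner_le (inner_comp_apply_self_le_of_comparable hm₀ hm₁.le
      (hAinv 0 le_rfl).2 (hAinv ε hε).1 (hRpos 0 le_rfl) (fun ψ => (hcomp ε hε ψ).1)
      fun ψ => (hcomp ε hε ψ).2)
  have hRdense : DenseRange (R 0) := denseRange_comp_of_rightInverse (hAinv 0 le_rfl).1 hpos
  have hsg : ∀ ε, 0 ≤ ε → IsContractionSemigroup (T ε) := fun ε hε =>
    ⟨hT0 ε hε, hTadd ε hε, hTcont ε hε, hTcontr ε hε⟩
  have hRgen : ∀ ε, 0 ≤ ε → IsGeneratorInverse (T ε) (R ε) := fun ε hε x t ht => by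
    simpa [R, (hAinv ε hε).1 x] using hgen ε hε (Ainv ε x) t ht.le
  have hu : ∀ ε, 0 ≤ ε → IntegrableOn (fun σ => B (u ε σ)) (Ioc 0 τ) := fun ε hε =>
    B.integrable_comp (((hu_mem ε hε).mono_measure
      (Measure.restrict_mono Ioc_subset_Ioi_self le_rfl)).integrable le_top)
  have hε₀ : ∀ᶠ ε in nhdsWithin (0 : ℝ) (Ioi 0), 0 ≤ ε :=
    eventually_mem_nhdsWithin.mono fun _ hε => le_of_lt hε
  refine tendstoUniformlyOn_inputMap (hε₀.mono hsg) (hsg 0 le_rfl)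
    (tendstoUniformlyOn_semigroup_apply_of_tendsto_resolvent (hε₀.mono hsg) (hε₀.mono hRgen)
      (hsg 0 le_rfl) (hRgen 0 le_rfl) (hε₀.mono hRbound) hres hRdense τ)
    (hε₀.mono hu) (hu 0 le_rfl) ?_
  convert tendsto_eLpNorm_one_comp_of_tendsto_eLpNorm_top B
    (Measure.restrict_mono Ioc_subset_Ioi_self le_rfl) hu_conv using 3 with ε
  funext σ
  exact (map_sub B _ _).symm

/-- **Statement 2.** Under assumptions (C1)-(C3) on the family `(A_ε)` (self-adjoint operators
with common domain `X₁` compactly embedded in `X`, uniform comparability with the strictly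
positive `A₀`, and strong resolvent convergence), if `u_ε → u_0` strongly in `L^∞((0,∞);U)`,
then the controlled states `w_ε(t) = ∫_0^t T^ε_{t-σ} B u_ε(σ) dσ` converge to `w_0`
in `C([0,τ];X)` for every `τ > 0`. -/
theorem stmt4 {X X₁ U : Type*}
    [NormedAddCommGroup X] [InnerProductSpace ℝ X] [CompleteSpace X]
    [NormedAddCommGroup X₁] [NormedSpace ℝ X₁]
    [NormedAddCommGroup U] [InnerProductSpace ℝ U] [CompleteSpace U]
    -- (C1): common domain `X₁` compactly embedded in `X`, each `A_ε` self-adjoint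
    (ι : X₁ →L[ℝ] X) (hι_inj : Function.Injective ι) (hι_cpt : IsCompactOperator ι)
    (A : ℝ → X₁ →L[ℝ] X)
    (hsa : ∀ ε : ℝ, 0 ≤ ε → ∀ ψ φ : X₁, ⟪A ε ψ, ι φ⟫ = ⟪ι ψ, A ε φ⟫)
    -- (C2): `A₀` strictly positive and `m₀⟨A₀ψ,ψ⟩ ≤ ⟨A_εψ,ψ⟩ ≤ m₁⟨A₀ψ,ψ⟩`
    (m₀ m₁ : ℝ) (hm₀ : 0 < m₀) (hm₁ : 0 < m₁)
    (hpos : ∀ ψ : X₁, ψ ≠ 0 → 0 < ⟪A 0 ψ, ι ψ⟫)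
    (hcomp : ∀ ε : ℝ, 0 ≤ ε → ∀ ψ : X₁,
      m₀ * ⟪A 0 ψ, ι ψ⟫ ≤ ⟪A ε ψ, ι ψ⟫ ∧ ⟪A ε ψ, ι ψ⟫ ≤ m₁ * ⟪A 0 ψ, ι ψ⟫)
    -- (C3): strong convergence of the resolvents `A_ε⁻¹ψ → A₀⁻¹ψ`
    (Ainv : ℝ → X →L[ℝ] X₁)
    (hAinv : ∀ ε : ℝ, 0 ≤ ε → (∀ x : X, A ε (Ainv ε x) = x) ∧ ∀ ψ : X₁, Ainv ε (A ε ψ) = ψ)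
    (hres : ∀ x : X, Tendsto (fun ε => ι (Ainv ε x)) (nhdsWithin 0 (Set.Ioi 0))
      (nhds (ι (Ainv 0 x))))
    -- `T^ε` is the contraction semigroup generated by `-A_ε`
    (T : ℝ → ℝ → X →L[ℝ] X)
    (hT0 : ∀ ε : ℝ, 0 ≤ ε → T ε 0 = 1)
    (hTadd : ∀ ε : ℝ, 0 ≤ ε → ∀ s t : ℝ, 0 ≤ s → 0 ≤ t → T ε (s + t) = (T ε s).comp (T ε t))
    (hTcont : ∀ ε : ℝ, 0 ≤ ε → ∀ x : X, Continuous fun t => T ε t x)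
    (hTcontr : ∀ ε : ℝ, 0 ≤ ε → ∀ t : ℝ, 0 ≤ t → ‖T ε t‖ ≤ 1)
    (hgen : ∀ ε : ℝ, 0 ≤ ε → ∀ ψ : X₁, ∀ t : ℝ, 0 ≤ t →
      HasDerivAt (fun s => T ε s (ι ψ)) (-(T ε t (A ε ψ))) t)
    -- control operator `B` and controls `u_ε → u_0` strongly in `L^∞((0,∞);U)`
    (B : U →L[ℝ] X) (u : ℝ → ℝ → U)
    (hu_mem : ∀ ε : ℝ, 0 ≤ ε → MemLp (u ε) ⊤ (volume.restrict (Set.Ioi 0)))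
    (hu_conv : Tendsto (fun ε => eLpNorm (fun t => u ε t - u 0 t) ⊤
      (volume.restrict (Set.Ioi 0))) (nhdsWithin 0 (Set.Ioi 0)) (nhds 0)) :
    ∀ τ : ℝ, 0 < τ →
      TendstoUniformlyOn
        (fun ε t => ∫ σ in Set.Ioc 0 t, T ε (t - σ) (B (u ε σ)))
        (fun t => ∫ σ in Set.Ioc 0 t, T 0 (t - σ) (B (u 0 σ)))
        (nhdsWithin 0 (Set.Ioi 0)) (Set.Icc 0 τ) :=
  stmt4_general ι A hsa m₀ m₁ hm₀ hm₁ hpos hcomp Ainv hAinv hres T hT0 hTadd hTcont hTcontr hgen B u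
    hu_mem hu_conv
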